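/- Let A, B be bounded operators on H, let p ≥ 1 be a real exponent, let t ∈ [0,1], and let S : [0,∞) × [0,∞) → [0,∞) be monotone increasing in each argument with S(a,b) ≤ t·a + (1−t)·b for all a, b ≥ 0. Let T be the bounded operator on the Hilbert space direct sum H ⊕ H defined by T(x,y) = (A y, B x) (the off-diagonal operator matrix with entries A and B). Then N_{S,p}(T) ≤ max{t, 1−t} · (‖A‖_ber + ‖B‖_ber)^p. -/

import Mathlib

noncomputable section
open ContinuousLinearMap

variable {H : Type*} [NormedAddCommGroup H] [InnerProductSpace ℂ H] [CompleteSpace H]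
variable {Ω : Type*}

/-- Normalization `v̂ = v/‖v‖`. -/
def nvec {E : Type*} [NormedAddCommGroup E] [InnerProductSpace ℂ E] (v : E) : E := ‖v‖⁻¹ • v

/-- Berezin radius with normalized kernels: `ber(X) = sup_{λ} |⟨X κ̂(λ), κ̂(λ)⟩|`. -/
def berN {E Ω' : Type*} [NormedAddCommGroup E] [InnerProductSpace ℂ E] [CompleteSpace E]
    (κ : Ω' → E) (X : E →L[ℂ] E) : ℝ :=
  ⨆ l : Ω', ‖(inner ℂ (X (nvec (κ l))) (nvec (κ l)) : ℂ)‖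

/-- Berezin norm with normalized kernels: `‖X‖_ber = sup_{λ,μ} |⟨X κ̂(λ), κ̂(μ)⟩|`. -/
def berNormN {E Ω' : Type*} [NormedAddCommGroup E] [InnerProductSpace ℂ E] [CompleteSpace E]
    (κ : Ω' → E) (X : E →L[ℂ] E) : ℝ :=
  ⨆ q : Ω' × Ω', ‖(inner ℂ (X (nvec (κ q.1))) (nvec (κ q.2)) : ℂ)‖

/-- `N_{S,p}` with normalized kernels. -/
def NSN {E Ω' : Type*} [NormedAddCommGroup E] [InnerProductSpace ℂ E] [CompleteSpace E]
    (S : ℝ → ℝ → ℝ) (p : ℝ) (κ : Ω' → E) (T : E →L[ℂ] E) : ℝ :=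
  ⨆ q : Ω' × Ω', S (‖(inner ℂ (T (nvec (κ q.1))) (nvec (κ q.2)) : ℂ)‖ ^ p)
    (‖(inner ℂ ((adjoint T) (nvec (κ q.1))) (nvec (κ q.2)) : ℂ)‖ ^ p)

/-- The kernel family on the Hilbert direct sum `H ⊕ H`, indexed by `Ω × Ω`. -/
def prodKernel (κ : Ω → H) : Ω × Ω → WithLp 2 (H × H) :=
  fun q => (WithLp.equiv 2 (H × H)).symm (κ q.1, κ q.2)

/-- `|X| = (X*X)^{1/2}` via continuous functional calculus. -/
def absOp (X : H →L[ℂ] H) : H →L[ℂ] H := cfc Real.sqrt (adjoint X * X)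

/-- `h(|X|)^r` : continuous functional calculus of `|X|` applied to `s ↦ h(s)^r`. -/
def opApply (h : ℝ → ℝ) (r : ℝ) (X : H →L[ℂ] H) : H →L[ℂ] H :=
  cfc (fun s : ℝ => h s ^ r) (absOp X)

lemma nvec_norm {E : Type*} [NormedAddCommGroup E] [InnerProductSpace ℂ E]
    {v : E} (hv : v ≠ 0) : ‖nvec v‖ = 1 := by
  simp [nvec, norm_smul, abs_of_nonneg (inv_nonneg.2 (norm_nonneg v)),
    inv_mul_cancel₀ (norm_ne_zero_iff.2 hv)]

lemma inner_nvec {E : Type*} [NormedAddCommGroup E] [InnerProductSpace ℂ E]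
    (X : E →L[ℂ] E) (w₁ w₂ : E) :
    ‖(inner ℂ (X (nvec w₁)) (nvec w₂) : ℂ)‖ = ‖w₁‖⁻¹ * (‖w₂‖⁻¹ * ‖(inner ℂ (X w₁) w₂ : ℂ)‖) := by
  rw [nvec, nvec, RCLike.real_smul_eq_coe_smul (K := ℂ), RCLike.real_smul_eq_coe_smul (K := ℂ),
    map_smul, inner_smul_left, inner_smul_right]
  simp [abs_of_nonneg (inv_nonneg.2 (norm_nonneg _)), mul_assoc]

lemma add_rpow_le' {a b p : ℝ} (ha : 0 ≤ a) (hb : 0 ≤ b) (hp : 1 ≤ p) :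
    a ^ p + b ^ p ≤ (a + b) ^ p := by
  lift a to NNReal using ha
  lift b to NNReal using hb
  exact_mod_cast NNReal.add_rpow_le_rpow_add a b hp

lemma inner_le_berNormN {E Ω' : Type*} [NormedAddCommGroup E] [InnerProductSpace ℂ E]
    [CompleteSpace E] (κ : Ω' → E) (hκ : ∀ l, κ l ≠ 0) (X : E →L[ℂ] E) (l m : Ω') :
    ‖(inner ℂ (X (κ l)) (κ m) : ℂ)‖ ≤ ‖κ l‖ * ‖κ m‖ * berNormN κ X := by
  have hbdd : BddAbove (Set.range fun q : Ω' × Ω' =>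
      ‖(inner ℂ (X (nvec (κ q.1))) (nvec (κ q.2)) : ℂ)‖) := by
    refine ⟨‖X‖, ?_⟩
    rintro r ⟨q, rfl⟩
    calc ‖(inner ℂ (X (nvec (κ q.1))) (nvec (κ q.2)) : ℂ)‖
        ≤ ‖X (nvec (κ q.1))‖ * ‖nvec (κ q.2)‖ := norm_inner_le_norm _ _
      _ ≤ (‖X‖ * ‖nvec (κ q.1)‖) * ‖nvec (κ q.2)‖ := by
          gcongr; exact X.le_opNorm _
      _ = ‖X‖ := by rw [nvec_norm (hκ _), nvec_norm (hκ _)]; ring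
  have h1 : ‖(inner ℂ (X (nvec (κ l))) (nvec (κ m)) : ℂ)‖ ≤ berNormN κ X :=
    le_ciSup hbdd (l, m)
  have h2 := inner_nvec X (κ l) (κ m)
  have hl : (0:ℝ) < ‖κ l‖ := norm_pos_iff.2 (hκ l)
  have hm : (0:ℝ) < ‖κ m‖ := norm_pos_iff.2 (hκ m)
  calc ‖(inner ℂ (X (κ l)) (κ m) : ℂ)‖
      = ‖κ l‖ * ‖κ m‖ * ‖(inner ℂ (X (nvec (κ l))) (nvec (κ m)) : ℂ)‖ := by
        rw [h2]; field_simp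
    _ ≤ ‖κ l‖ * ‖κ m‖ * berNormN κ X := by
        exact mul_le_mul_of_nonneg_left h1 (by positivity)

lemma berNormN_nonneg {E Ω' : Type*} [NormedAddCommGroup E] [InnerProductSpace ℂ E]
    [CompleteSpace E] (κ : Ω' → E) (X : E →L[ℂ] E) : 0 ≤ berNormN κ X :=
  Real.iSup_nonneg fun _ => norm_nonneg _

lemma final_chain {p t α β u v a b : ℝ} (hp : 1 ≤ p) (ht0 : 0 ≤ t) (ht1 : t ≤ 1)
    (S : ℝ → ℝ → ℝ) (hS_le : ∀ x y : ℝ, 0 ≤ x → 0 ≤ y → S x y ≤ t * x + (1 - t) * y)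
    (hα : 0 ≤ α) (hβ : 0 ≤ β) (hu : 0 ≤ u) (hv : 0 ≤ v) (huv : u + v ≤ 1)
    (ha0 : 0 ≤ a) (hb0 : 0 ≤ b) (ha : a ≤ α * u + β * v) (hb : b ≤ α * v + β * u) :
    S (a ^ p) (b ^ p) ≤ max t (1 - t) * (α + β) ^ p := by
  have hmax : 0 ≤ max t (1 - t) := le_trans ht0 (le_max_left _ _)
  have hap : 0 ≤ a ^ p := Real.rpow_nonneg ha0 p
  have hbp : 0 ≤ b ^ p := Real.rpow_nonneg hb0 p
  have hab : a + b ≤ α + β := by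
    nlinarith [mul_le_mul_of_nonneg_left huv (by linarith : (0:ℝ) ≤ α + β)]
  calc S (a ^ p) (b ^ p)
      ≤ t * a ^ p + (1 - t) * b ^ p := hS_le _ _ hap hbp
    _ ≤ max t (1 - t) * (a ^ p + b ^ p) := by
        have h1 : t ≤ max t (1 - t) := le_max_left _ _
        have h2 : 1 - t ≤ max t (1 - t) := le_max_right _ _
        nlinarith
    _ ≤ max t (1 - t) * ((a + b) ^ p) :=
        mul_le_mul_of_nonneg_left (add_rpow_le' ha0 hb0 hp) hmax
    _ ≤ max t (1 - t) * ((α + β) ^ p) :=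
        mul_le_mul_of_nonneg_left (Real.rpow_le_rpow (by positivity) hab (by linarith)) hmax

theorem stmt9 [Nonempty Ω] (κ : Ω → H) (hκ : ∀ l, κ l ≠ 0)
    (A B : H →L[ℂ] H)
    (T : WithLp 2 (H × H) →L[ℂ] WithLp 2 (H × H))
    (hT : ∀ x y : H,
      T ((WithLp.equiv 2 (H × H)).symm (x, y)) = (WithLp.equiv 2 (H × H)).symm (A y, B x))
    (p : ℝ) (hp : 1 ≤ p)
    (t : ℝ) (ht0 : 0 ≤ t) (ht1 : t ≤ 1)
    (S : ℝ → ℝ → ℝ)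
    (hS_nonneg : ∀ a b : ℝ, 0 ≤ a → 0 ≤ b → 0 ≤ S a b)
    (hS_mono₁ : ∀ b ∈ Set.Ici (0 : ℝ), MonotoneOn (fun a => S a b) (Set.Ici 0))
    (hS_mono₂ : ∀ a ∈ Set.Ici (0 : ℝ), MonotoneOn (fun b => S a b) (Set.Ici 0))
    (hS_le : ∀ a b : ℝ, 0 ≤ a → 0 ≤ b → S a b ≤ t * a + (1 - t) * b) :
    NSN S p (prodKernel κ) T
      ≤ max t (1 - t) * (berNormN κ A + berNormN κ B) ^ p := by
  set α := berNormN κ A with hα_def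
  set β := berNormN κ B with hβ_def
  have hα : 0 ≤ α := berNormN_nonneg κ A
  have hβ : 0 ≤ β := berNormN_nonneg κ B
  have hmax : 0 ≤ max t (1 - t) := le_trans ht0 (le_max_left _ _)
  have hRHS : 0 ≤ max t (1 - t) * (α + β) ^ p :=
    mul_nonneg hmax (Real.rpow_nonneg (by linarith) p)
  unfold NSN
  refine Real.iSup_le (fun q => ?_) hRHS
  obtain ⟨⟨l₁, l₂⟩, ⟨m₁, m₂⟩⟩ := q
  set x₁ := κ l₁; set x₂ := κ l₂; set y₁ := κ m₁; set y₂ := κ m₂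
  set K₁ : WithLp 2 (H × H) := prodKernel κ (l₁, l₂) with hK₁
  set K₂ : WithLp 2 (H × H) := prodKernel κ (m₁, m₂) with hK₂
  have hK₁ne : K₁ ≠ 0 := by
    simp only [hK₁, prodKernel]
    intro h
    have : (κ l₁, κ l₂) = (0 : H × H) := by
      simpa using congrArg (WithLp.equiv 2 (H × H)) h
    exact hκ l₁ (by simpa using congrArg Prod.fst this)
  have hK₂ne : K₂ ≠ 0 := by
    simp only [hK₂, prodKernel]
    intro h
    have : (κ m₁, κ m₂) = (0 : H × H) := by
      simpa using congrArg (WithLp.equiv 2 (H × H)) h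
    exact hκ m₁ (by simpa using congrArg Prod.fst this)
  set N := ‖K₁‖ with hN
  set M := ‖K₂‖ with hM
  have hN0 : 0 < N := norm_pos_iff.2 hK₁ne
  have hM0 : 0 < M := norm_pos_iff.2 hK₂ne
  -- norms squared
  have hN2 : N ^ 2 = ‖x₁‖ ^ 2 + ‖x₂‖ ^ 2 := by
    rw [hN, WithLp.prod_norm_sq_eq_of_L2]
    rfl
  have hM2 : M ^ 2 = ‖y₁‖ ^ 2 + ‖y₂‖ ^ 2 := by
    rw [hM, WithLp.prod_norm_sq_eq_of_L2]
    rfl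
  -- Cauchy-Schwarz in ℝ²
  have hCS : ‖x₂‖ * ‖y₁‖ + ‖x₁‖ * ‖y₂‖ ≤ N * M := by
    nlinarith [sq_nonneg (‖x₂‖ * ‖y₂‖ - ‖x₁‖ * ‖y₁‖), sq_nonneg (‖x₂‖ * ‖y₁‖ + ‖x₁‖ * ‖y₂‖),
      mul_pos hN0 hM0, norm_nonneg x₁, norm_nonneg x₂, norm_nonneg y₁, norm_nonneg y₂,
      sq_nonneg (N * M - (‖x₂‖ * ‖y₁‖ + ‖x₁‖ * ‖y₂‖)), sq_nonneg (N * M + (‖x₂‖ * ‖y₁‖ + ‖x₁‖ * ‖y₂‖))]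
  set u := N⁻¹ * (M⁻¹ * (‖x₂‖ * ‖y₁‖)) with hu_def
  set v := N⁻¹ * (M⁻¹ * (‖x₁‖ * ‖y₂‖)) with hv_def
  have hu : 0 ≤ u := by positivity
  have hv : 0 ≤ v := by positivity
  have huv : u + v ≤ 1 := by
    have key : u + v = (‖x₂‖ * ‖y₁‖ + ‖x₁‖ * ‖y₂‖) / (N * M) := by
      rw [hu_def, hv_def]; field_simp
    rw [key, div_le_one (mul_pos hN0 hM0)]
    exact hCS
  -- bound a
  set a := ‖(inner ℂ (T (nvec K₁)) (nvec K₂) : ℂ)‖ with ha_def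
  set b := ‖(inner ℂ ((adjoint T) (nvec K₁)) (nvec K₂) : ℂ)‖ with hb_def
  have ha0 : 0 ≤ a := norm_nonneg _
  have hb0 : 0 ≤ b := norm_nonneg _
  have hTK₁ : T K₁ = (WithLp.equiv 2 (H × H)).symm (A x₂, B x₁) := hT x₁ x₂
  have hTK₂ : T K₂ = (WithLp.equiv 2 (H × H)).symm (A y₂, B y₁) := hT y₁ y₂
  have hinner1 : (inner ℂ (T K₁) K₂ : ℂ) = inner ℂ (A x₂) y₁ + inner ℂ (B x₁) y₂ := by
    rw [hTK₁, hK₂]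
    simp [WithLp.prod_inner_apply, prodKernel]
    rfl
  have hinner2 : (inner ℂ (T K₂) K₁ : ℂ) = inner ℂ (A y₂) x₁ + inner ℂ (B y₁) x₂ := by
    rw [hTK₂, hK₁]
    simp [WithLp.prod_inner_apply, prodKernel]
    rfl
  have hA1 : ‖(inner ℂ (A x₂) y₁ : ℂ)‖ ≤ ‖x₂‖ * ‖y₁‖ * α := inner_le_berNormN κ hκ A l₂ m₁
  have hB1 : ‖(inner ℂ (B x₁) y₂ : ℂ)‖ ≤ ‖x₁‖ * ‖y₂‖ * β := inner_le_berNormN κ hκ B l₁ m₂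
  have hA2 : ‖(inner ℂ (A y₂) x₁ : ℂ)‖ ≤ ‖y₂‖ * ‖x₁‖ * α := inner_le_berNormN κ hκ A m₂ l₁
  have hB2 : ‖(inner ℂ (B y₁) x₂ : ℂ)‖ ≤ ‖y₁‖ * ‖x₂‖ * β := inner_le_berNormN κ hκ B m₁ l₂
  have ha : a ≤ α * u + β * v := by
    rw [ha_def, inner_nvec T K₁ K₂, ← hN, ← hM]
    have h1 : ‖(inner ℂ (T K₁) K₂ : ℂ)‖ ≤ ‖x₂‖ * ‖y₁‖ * α + ‖x₁‖ * ‖y₂‖ * β := by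
      rw [hinner1]
      exact le_trans (norm_add_le _ _) (add_le_add hA1 hB1)
    calc N⁻¹ * (M⁻¹ * ‖(inner ℂ (T K₁) K₂ : ℂ)‖)
        ≤ N⁻¹ * (M⁻¹ * (‖x₂‖ * ‖y₁‖ * α + ‖x₁‖ * ‖y₂‖ * β)) := by
          gcongr
      _ = α * u + β * v := by rw [hu_def, hv_def]; ring
  have hb : b ≤ α * v + β * u := by
    rw [hb_def, inner_nvec (adjoint T) K₁ K₂, ← hN, ← hM]
    have heq : ‖(inner ℂ ((adjoint T) K₁) K₂ : ℂ)‖ = ‖(inner ℂ (T K₂) K₁ : ℂ)‖ := by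
      rw [adjoint_inner_left, ← inner_conj_symm]
      exact RCLike.norm_conj _
    have h1 : ‖(inner ℂ ((adjoint T) K₁) K₂ : ℂ)‖ ≤ ‖y₂‖ * ‖x₁‖ * α + ‖y₁‖ * ‖x₂‖ * β := by
      rw [heq, hinner2]
      exact le_trans (norm_add_le _ _) (add_le_add hA2 hB2)
    calc N⁻¹ * (M⁻¹ * ‖(inner ℂ ((adjoint T) K₁) K₂ : ℂ)‖)
        ≤ N⁻¹ * (M⁻¹ * (‖y₂‖ * ‖x₁‖ * α + ‖y₁‖ * ‖x₂‖ * β)) := by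
          gcongr
      _ = α * v + β * u := by rw [hu_def, hv_def]; ring
  exact final_chain hp ht0 ht1 S hS_le hα hβ hu hv huv ha0 hb0 ha hb
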